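/- Let μ̃ be the bilinear skew-symmetric map on ℝ^7 with nonzero basis brackets [e1,e2]=(2√4305/861)e3+(√111930/1722)e4, [e1,e3]=(2√22386/861)e5, [e1,e4]=(5√861/1722)e5, [e1,e5]=(√902/82)e6, [e1,e6]=(√82/41)e7, [e2,e4]=(√861/82)e7. Then μ̃ satisfies the Jacobi identity, D = diag(1,3,4,4,5,6,7) is a derivation of (ℝ^7,μ̃), and m(μ̃) = -(38/41)·Id + (15/82)·D; in particular m(μ̃) = diag(-61/82,-31/82,-8/41,-8/41,-1/82,7/41,29/82). -/

import Mathlib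

open Finset

noncomputable section

/-- `ℝ⁷` with its standard basis and standard inner product. -/
abbrev V7 : Type := Fin 7 → ℝ

/-- The standard basis vector `e i`. -/
def e (i : Fin 7) : V7 := Pi.single i 1

/-- The standard inner product on `ℝ⁷`. -/
def dot (x y : V7) : ℝ := ∑ i, x i * y i

/-- Structure constants built from a list of entries `(i, j, k, a)`, each meaning that
`μ (e i) (e j)` has component `a` along `e k` (and `μ (e j) (e i)` has component `-a`);
all unlisted basis brackets are `0`. -/
def toC (L : List (Fin 7 × Fin 7 × Fin 7 × ℝ)) (i j k : Fin 7) : ℝ :=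
  (L.map fun t =>
      (if t.1 = i ∧ t.2.1 = j ∧ t.2.2.1 = k then t.2.2.2 else 0)
    - (if t.1 = j ∧ t.2.1 = i ∧ t.2.2.1 = k then t.2.2.2 else 0)).sum

/-- The bilinear skew-symmetric map on `ℝ⁷` with structure constants `c`. -/
def br (c : Fin 7 → Fin 7 → Fin 7 → ℝ) (x y : V7) : V7 :=
  fun k => ∑ i, ∑ j, x i * y j * c i j k

lemma br_add_left (c : Fin 7 → Fin 7 → Fin 7 → ℝ) (x x' y : V7) :
    br c (x + x') y = br c x y + br c x' y := by
  funext k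
  simp only [br, Pi.add_apply, ← Finset.sum_add_distrib]
  exact Finset.sum_congr rfl fun i _ => Finset.sum_congr rfl fun j _ => by ring

lemma br_smul_left (c : Fin 7 → Fin 7 → Fin 7 → ℝ) (r : ℝ) (x y : V7) :
    br c (r • x) y = r • br c x y := by
  funext k
  simp only [br, Pi.smul_apply, smul_eq_mul, Finset.mul_sum]
  exact Finset.sum_congr rfl fun i _ => Finset.sum_congr rfl fun j _ => by ring

lemma br_add_right (c : Fin 7 → Fin 7 → Fin 7 → ℝ) (x y y' : V7) :
    br c x (y + y') = br c x y + br c x y' := by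
  funext k
  simp only [br, Pi.add_apply, ← Finset.sum_add_distrib]
  exact Finset.sum_congr rfl fun i _ => Finset.sum_congr rfl fun j _ => by ring

lemma br_smul_right (c : Fin 7 → Fin 7 → Fin 7 → ℝ) (r : ℝ) (x y : V7) :
    br c x (r • y) = r • br c x y := by
  funext k
  simp only [br, Pi.smul_apply, smul_eq_mul, Finset.mul_sum]
  exact Finset.sum_congr rfl fun i _ => Finset.sum_congr rfl fun j _ => by ring

lemma br_zero_left (c : Fin 7 → Fin 7 → Fin 7 → ℝ) (y : V7) : br c 0 y = 0 := by
  funext k; simp [br]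

lemma br_zero_right (c : Fin 7 → Fin 7 → Fin 7 → ℝ) (x : V7) : br c x 0 = 0 := by
  funext k; simp [br]

/-- The space of derivations of the algebra `(ℝ⁷, br c)`, i.e. the linear maps `D` with
`D (μ x y) = μ (D x) y + μ x (D y)` for all `x, y`, as a submodule of the endomorphisms. -/
def derivations (c : Fin 7 → Fin 7 → Fin 7 → ℝ) : Submodule ℝ (Module.End ℝ V7) where
  carrier := {D | ∀ x y, D (br c x y) = br c (D x) y + br c x (D y)}
  add_mem' := by
    intro D E hD hE x y
    simp only [LinearMap.add_apply, hD x y, hE x y, br_add_left, br_add_right]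
    abel
  zero_mem' := by
    intro x y
    simp [br_zero_left, br_zero_right]
  smul_mem' := by
    intro r D hD x y
    simp only [LinearMap.smul_apply, hD x y, smul_add, br_smul_left, br_smul_right]

/-- The Jacobi identity for the bracket `br c`. -/
def Jacobi (c : Fin 7 → Fin 7 → Fin 7 → ℝ) : Prop :=
  ∀ x y z : V7, br c (br c x y) z + br c (br c y z) x + br c (br c z x) y = 0

/-- Skew-symmetry of the bracket `br c`. -/
def Skew (c : Fin 7 → Fin 7 → Fin 7 → ℝ) : Prop :=
  ∀ x y : V7, br c x y = - br c y x

/-- The diagonal endomorphism `diag (a 1, …, a 7)` of `ℝ⁷`, `e i ↦ a i • e i`. -/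
def diagL (a : Fin 7 → ℝ) : Module.End ℝ V7 :=
  LinearMap.pi fun i => a i • LinearMap.proj i

/-- Structure constants of the bracket `μ̃`. -/
def c14 : Fin 7 → Fin 7 → Fin 7 → ℝ :=
  toC [(0, 1, 2, 2 * Real.sqrt 4305 / 861),
   (0, 1, 3, Real.sqrt 111930 / 1722),
   (0, 2, 4, 2 * Real.sqrt 22386 / 861),
   (0, 3, 4, 5 * Real.sqrt 861 / 1722),
   (0, 4, 5, Real.sqrt 902 / 82),
   (0, 5, 6, Real.sqrt 82 / 41),
   (1, 3, 6, Real.sqrt 861 / 82)]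

/-!
The Jacobi identity and the derivation property of `diag(1,3,4,4,5,6,7)` hold identically in
the seven structure constants of `μ̃`, so they are proved for the whole family `c14Family`.
For that family the moment map is diagonal with entries quadratic in the constants, except for
the single `(e₃, e₄)` entry `2 (a₁ a₂ - a₃ a₄)`. For `μ̃` this entry vanishes because
`√4305 · √111930 = 5 √22386 · √861`, and the squares of its constants give the stated diagonal.
-/

lemma toC_swap (L : List (Fin 7 × Fin 7 × Fin 7 × ℝ)) (i j k : Fin 7) :
    toC L j i k = -toC L i j k := by
  unfold toC
  induction L with
  | nil => simp
  | cons t L ih => simp only [List.map_cons, List.sum_cons, ih]; ring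

lemma skew_of_antisymm {c : Fin 7 → Fin 7 → Fin 7 → ℝ} (hc : ∀ i j k, c j i k = -c i j k) :
    Skew c := by
  intro x y
  funext k
  simp only [br, Pi.neg_apply, ← Finset.sum_neg_distrib]
  rw [Finset.sum_comm]
  exact Finset.sum_congr rfl fun i _ => Finset.sum_congr rfl fun j _ => by rw [hc]; ring

lemma dot_e (v : V7) (l : Fin 7) : dot v (e l) = v l := by
  simp [dot, e, Pi.single_apply]

lemma diagL_apply (a : Fin 7 → ℝ) (v : V7) (i : Fin 7) : diagL a v i = a i * v i := rfl

lemma smul_one_add_smul_diagL (r s : ℝ) (a : Fin 7 → ℝ) :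
    r • (1 : Module.End ℝ V7) + s • diagL a = diagL fun i => r + s * a i := by
  refine LinearMap.ext fun v => funext fun i => ?_
  simp only [LinearMap.add_apply, LinearMap.smul_apply, Module.End.one_apply, Pi.add_apply,
    Pi.smul_apply, smul_eq_mul, diagL_apply]
  ring

lemma eq_of_dot_eq {m n : Module.End ℝ V7} (h : ∀ x y, dot (m x) y = dot (n x) y) : m = n := by
  refine LinearMap.ext fun x => funext fun l => ?_
  simpa only [dot_e] using h x (e l)

section family

variable (a₁ a₂ a₃ a₄ a₅ a₆ a₇ : ℝ)

def c14Family : Fin 7 → Fin 7 → Fin 7 → ℝ :=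
  toC [(0, 1, 2, a₁), (0, 1, 3, a₂), (0, 2, 4, a₃), (0, 3, 4, a₄), (0, 4, 5, a₅),
    (0, 5, 6, a₆), (1, 3, 6, a₇)]

lemma br_c14Family (x y : V7) :
    br (c14Family a₁ a₂ a₃ a₄ a₅ a₆ a₇) x y =
      ![0, 0, a₁ * (x 0 * y 1 - x 1 * y 0), a₂ * (x 0 * y 1 - x 1 * y 0),
        a₃ * (x 0 * y 2 - x 2 * y 0) + a₄ * (x 0 * y 3 - x 3 * y 0),
        a₅ * (x 0 * y 4 - x 4 * y 0),
        a₆ * (x 0 * y 5 - x 5 * y 0) + a₇ * (x 1 * y 3 - x 3 * y 1)] := by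
  funext k
  fin_cases k <;> simp [br, c14Family, toC, Fin.sum_univ_seven] <;> ring

lemma jacobi_c14Family : Jacobi (c14Family a₁ a₂ a₃ a₄ a₅ a₆ a₇) := by
  intro x y z
  funext k
  fin_cases k <;> simp [br_c14Family] <;> ring

lemma diagL_mem_derivations_c14Family :
    diagL ![1, 3, 4, 4, 5, 6, 7] ∈ derivations (c14Family a₁ a₂ a₃ a₄ a₅ a₆ a₇) := by
  intro x y
  funext k
  fin_cases k <;> simp [br_c14Family, diagL_apply] <;> ring

lemma moment_form_c14Family (h : a₁ * a₂ = a₃ * a₄) (x y : V7) :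
    -2 * ∑ i, ∑ j, dot (br (c14Family a₁ a₂ a₃ a₄ a₅ a₆ a₇) x (e i)) (e j) *
        dot (br (c14Family a₁ a₂ a₃ a₄ a₅ a₆ a₇) y (e i)) (e j)
      + ∑ i, ∑ j, dot (br (c14Family a₁ a₂ a₃ a₄ a₅ a₆ a₇) (e i) (e j)) x *
        dot (br (c14Family a₁ a₂ a₃ a₄ a₅ a₆ a₇) (e i) (e j)) y
      = dot (diagL ![-2 * (a₁ ^ 2 + a₂ ^ 2 + a₃ ^ 2 + a₄ ^ 2 + a₅ ^ 2 + a₆ ^ 2),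
          -2 * (a₁ ^ 2 + a₂ ^ 2 + a₇ ^ 2), 2 * (a₁ ^ 2 - a₃ ^ 2), 2 * (a₂ ^ 2 - a₄ ^ 2 - a₇ ^ 2),
          2 * (a₃ ^ 2 + a₄ ^ 2 - a₅ ^ 2), 2 * (a₅ ^ 2 - a₆ ^ 2), 2 * (a₆ ^ 2 + a₇ ^ 2)] x) y := by
  simp [br_c14Family, diagL_apply, dot, e, Pi.single_apply, Fin.sum_univ_seven]
  linear_combination 2 * (x 2 * y 3 + x 3 * y 2) * h

end family

lemma c14_eq_c14Family :
    c14 = c14Family (2 * √4305 / 861) (√111930 / 1722) (2 * √22386 / 861) (5 * √861 / 1722)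
      (√902 / 82) (√82 / 41) (√861 / 82) := rfl

lemma moment_form_c14 (x y : V7) :
    -2 * ∑ i, ∑ j, dot (br c14 x (e i)) (e j) * dot (br c14 y (e i)) (e j)
      + ∑ i, ∑ j, dot (br c14 (e i) (e j)) x * dot (br c14 (e i) (e j)) y
      = dot (diagL ![-61/82, -31/82, -8/41, -8/41, -1/82, 7/41, 29/82] x) y := by
  have hprod : (2 * √4305 / 861) * (√111930 / 1722) = (2 * √22386 / 861) * (5 * √861 / 1722) := by
    have h : √4305 * √111930 = 5 * (√22386 * √861) := by
      rw [← Real.sqrt_mul (by norm_num), ← Real.sqrt_mul (by norm_num),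
        show (4305 : ℝ) * 111930 = 5 ^ 2 * (22386 * 861) by norm_num,
        Real.sqrt_mul (by positivity), Real.sqrt_sq (by norm_num)]
    linear_combination 2 / (861 * 1722) * h
  rw [c14_eq_c14Family, moment_form_c14Family _ _ _ _ _ _ _ hprod]
  congr 3
  ext i
  fin_cases i <;> norm_num [div_pow, mul_pow]

/-- The bracket satisfies the Jacobi identity (and is skew-symmetric),
`D` is a derivation of it, and the unnormalized moment map `m(μ̃)` — i.e. the endomorphism
`m` of `ℝ⁷` determined by
`⟨m x, y⟩ = -2 ∑ᵢⱼ ⟨μ̃(x,eᵢ),eⱼ⟩⟨μ̃(y,eᵢ),eⱼ⟩ + ∑ᵢⱼ ⟨μ̃(eᵢ,eⱼ),x⟩⟨μ̃(eᵢ,eⱼ),y⟩` —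
equals `-(38/41) • Id + 15/82 • D`, which is the indicated diagonal map. -/
theorem stmt :
    Skew c14 ∧ Jacobi c14 ∧
    diagL ![1, 3, 4, 4, 5, 6, 7] ∈ derivations c14 ∧
    ∀ m : Module.End ℝ V7,
      (∀ x y : V7, dot (m x) y =
          -2 * ∑ i, ∑ j, dot (br c14 x (e i)) (e j) * dot (br c14 y (e i)) (e j)
          + ∑ i, ∑ j, dot (br c14 (e i) (e j)) x * dot (br c14 (e i) (e j)) y) →
      m = (-(38/41) : ℝ) • (1 : Module.End ℝ V7) + (15/82 : ℝ) • diagL ![1, 3, 4, 4, 5, 6, 7]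
      ∧ m = diagL ![-61/82, -31/82, -8/41, -8/41, -1/82, 7/41, 29/82] := by
  refine ⟨skew_of_antisymm (toC_swap _), jacobi_c14Family _ _ _ _ _ _ _,
    diagL_mem_derivations_c14Family _ _ _ _ _ _ _, fun m hm => ?_⟩
  have hm_diag : m = diagL ![-61/82, -31/82, -8/41, -8/41, -1/82, 7/41, 29/82] :=
    eq_of_dot_eq fun x y => by rw [hm, moment_form_c14]
  refine ⟨?_, hm_diag⟩
  rw [hm_diag, smul_one_add_smul_diagL]
  congr 1
  ext i
  fin_cases i <;> norm_num
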